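/- Suppose every agent's centrality C_i satisfies Axiom 1 (increasing), and let (θ_i) be any thresholds. Then a network h is an APSN of the truncated game with thresholds (θ_i) if and only if h has 'Pareto optimal centralities', i.e.: for every non-adjacent pair i ≠ j, C_i(h) ≥ θ_i or C_j(h) ≥ θ_j; and for every edge ij ∈ E(h), C_i(h−ij) < θ_i and C_j(h−ij) < θ_j. -/

import Mathlib

open SimpleGraph

/-- Degree of vertex `i` in network `g`. -/
noncomputable def deg {V : Type*} (g : SimpleGraph V) (i : V) : ℕ :=
  Nat.card (g.neighborSet i)

/-- The network `g` with the (missing) edge `ij` added. -/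
def addE {V : Type*} (g : SimpleGraph V) (i j : V) : SimpleGraph V :=
  g ⊔ SimpleGraph.fromEdgeSet {s(i, j)}

/-- The network `g` with the edge `ij` removed. -/
def delE {V : Type*} (g : SimpleGraph V) (i j : V) : SimpleGraph V :=
  g.deleteEdges {s(i, j)}

/-- Utility of agent `i` in the game with centralities `C` and edge cost `c`. -/
noncomputable def util {V : Type*} (C : V → SimpleGraph V → ℝ) (c : ℝ) (i : V)
    (g : SimpleGraph V) : ℝ :=
  C i g - c * (deg g i)

/-- Adding the missing edge `ij` is an improving move. -/
def ImprovingAdd {V : Type*} (C : V → SimpleGraph V → ℝ) (c : ℝ) (g : SimpleGraph V)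
    (i j : V) : Prop :=
  util C c i (addE g i j) ≥ util C c i g ∧ util C c j (addE g i j) ≥ util C c j g ∧
    (util C c i (addE g i j) > util C c i g ∨ util C c j (addE g i j) > util C c j g)

/-- Deleting the edge `ij` is an improving move. -/
def ImprovingDel {V : Type*} (C : V → SimpleGraph V → ℝ) (c : ℝ) (g : SimpleGraph V)
    (i j : V) : Prop :=
  util C c i (delE g i j) > util C c i g ∨ util C c j (delE g i j) > util C c j g

/-- `g` is pairwise stable at edge cost `c`. -/
def PairwiseStable {V : Type*} (C : V → SimpleGraph V → ℝ) (c : ℝ) (g : SimpleGraph V) : Prop :=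
  (∀ i j : V, i ≠ j → ¬ g.Adj i j → ¬ ImprovingAdd C c g i j) ∧
  (∀ i j : V, g.Adj i j → ¬ ImprovingDel C c g i j)

/-- `g` is asymptotically pairwise stable. -/
def APSN {V : Type*} (C : V → SimpleGraph V → ℝ) (g : SimpleGraph V) : Prop :=
  ∃ ε₀ : ℝ, 0 < ε₀ ∧ ∀ c : ℝ, 0 < c → c < ε₀ → PairwiseStable C c g

/-- Axiom 1: the centrality of agent `i` is increasing. -/
def Axiom1 {V : Type*} (C : V → SimpleGraph V → ℝ) (i : V) : Prop :=
  ∀ (g : SimpleGraph V) (j : V), j ≠ i → ¬ g.Adj i j → C i (addE g i j) > C i g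

/-- Axiom 1′: the centrality of agent `i` is decreasing. -/
def Axiom1' {V : Type*} (C : V → SimpleGraph V → ℝ) (i : V) : Prop :=
  ∀ (g : SimpleGraph V) (j : V), j ≠ i → ¬ g.Adj i j → C i (addE g i j) < C i g

/-- Axiom 2: the centrality of agent `i` is componentwise. -/
def Axiom2 {V : Type*} (C : V → SimpleGraph V → ℝ) (i : V) : Prop :=
  ∀ (g : SimpleGraph V) (j : V), j ≠ i → ¬ g.Adj i j →
    ((g.Reachable i j → C i (addE g i j) > C i g) ∧
     (¬ g.Reachable i j → C i (addE g i j) ≤ C i g))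

/-- Axiom 2′: the centrality of agent `i` is peripheral. -/
def Axiom2' {V : Type*} (C : V → SimpleGraph V → ℝ) (i : V) : Prop :=
  ∀ (g : SimpleGraph V) (j : V), j ≠ i → ¬ g.Adj i j →
    ((g.Reachable i j → C i (addE g i j) ≤ C i g) ∧
     (¬ g.Reachable i j → C i (addE g i j) > C i g))

/-- The centrality of agent `i` is degree homophilic with (strictly increasing) `f`. -/
def DegreeHomophilic {V : Type*} (C : V → SimpleGraph V → ℝ) (i : V) (f : ℕ → ℤ) : Prop :=
  ∀ (g : SimpleGraph V) (j : V), j ≠ i → ¬ g.Adj i j →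
    (C i (addE g i j) > C i g ↔ (deg g j : ℤ) ≤ f (deg g i))

/-! At edge cost `c`, a single move changes an endpoint's utility by the change of its
centrality, shifted by `-c` for an addition and `+c` for a deletion. Letting `c → 0⁺`, no
addition of `ij` is improving iff one endpoint's centrality does not rise, and no deletion iff
both endpoints' centralities strictly drop; since there are finitely many pairs, these limits
hold simultaneously. For the truncation `min (C i) (θ i)` of an increasing `C i`, adding `ij`
does not raise it iff `θ i ≤ C i h`, and deleting `ij` lowers it iff `C i (h - ij) < θ i`. -/

open Filter Topology

lemma eventually_nhdsGT_zero_add_le_iff {a b : ℝ} :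
    (∀ᶠ c in 𝓝[>] (0 : ℝ), a + c ≤ b) ↔ a < b := by
  constructor
  · intro h
    obtain ⟨c, hle, hc : 0 < c⟩ := (h.and self_mem_nhdsWithin).exists
    linarith
  · intro hab
    filter_upwards [(eventually_lt_nhds (sub_pos.mpr hab)).filter_mono nhdsWithin_le_nhds]
      with c hc
    linarith

section Networks

variable {V : Type*}

lemma addE_comm (g : SimpleGraph V) (i j : V) : addE g i j = addE g j i := by
  rw [addE, addE, Sym2.eq_swap]

lemma delE_comm (g : SimpleGraph V) (i j : V) : delE g i j = delE g j i := by
  rw [delE, delE, Sym2.eq_swap]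

lemma addE_delE {g : SimpleGraph V} {i j : V} (hadj : g.Adj i j) : addE (delE g i j) i j = g := by
  ext a b
  simp only [addE, delE, sup_adj, deleteEdges_adj, fromEdgeSet_adj, Set.mem_singleton_iff]
  by_cases hab : s(a, b) = s(i, j)
  · simp only [hab, not_true_eq_false, and_false, true_and, false_or]
    exact ⟨fun _ => by rwa [← mem_edgeSet, hab], Adj.ne⟩
  · simp [hab]

lemma not_adj_delE (g : SimpleGraph V) (i j : V) : ¬ (delE g i j).Adj i j := by
  simp [delE]

lemma neighborSet_addE (g : SimpleGraph V) {i j : V} (hne : i ≠ j) :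
    (addE g i j).neighborSet i = insert j (g.neighborSet i) := by
  ext k
  simp only [addE, mem_neighborSet, sup_adj, fromEdgeSet_adj, Set.mem_singleton_iff,
    Sym2.eq_iff, Set.mem_insert_iff]
  aesop

lemma neighborSet_delE (g : SimpleGraph V) (i j : V) :
    (delE g i j).neighborSet i = g.neighborSet i \ {j} := by
  ext k
  simp only [delE, mem_neighborSet, deleteEdges_adj, Set.mem_singleton_iff, Sym2.eq_iff,
    Set.mem_sdiff]
  aesop

variable [Finite V]

lemma deg_addE (g : SimpleGraph V) {i j : V} (hne : i ≠ j) (hadj : ¬ g.Adj i j) :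
    deg (addE g i j) i = deg g i + 1 := by
  rw [deg, deg, neighborSet_addE g hne, Nat.card_coe_set_eq, Nat.card_coe_set_eq,
    Set.ncard_insert_of_notMem (by simpa using hadj) (Set.toFinite _)]

lemma deg_delE (g : SimpleGraph V) {i j : V} (hadj : g.Adj i j) :
    deg (delE g i j) i + 1 = deg g i := by
  rw [deg, deg, neighborSet_delE, Nat.card_coe_set_eq, Nat.card_coe_set_eq,
    Set.ncard_sdiff_singleton_add_one (by simpa using hadj) (Set.toFinite _)]

end Networks

section Game

variable {V : Type*} (D : V → SimpleGraph V → ℝ) {g : SimpleGraph V} {i j : V}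

lemma apsn_iff_eventually : APSN D g ↔ ∀ᶠ c in 𝓝[>] (0 : ℝ), PairwiseStable D c g := by
  rw [APSN, (nhdsGT_basis (0 : ℝ)).eventually_iff]
  simp only [Set.mem_Ioo, and_imp]

variable [Finite V]

lemma util_addE {c : ℝ} (hne : i ≠ j) (hadj : ¬ g.Adj i j) :
    util D c i (addE g i j) = util D c i g + (D i (addE g i j) - D i g - c) := by
  rw [util, util, deg_addE g hne hadj]
  push_cast
  ring

lemma util_delE {c : ℝ} (hadj : g.Adj i j) :
    util D c i (delE g i j) = util D c i g + (D i (delE g i j) - D i g + c) := by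
  rw [util, util, ← deg_delE g hadj]
  push_cast
  ring

lemma improvingAdd_iff {c : ℝ} (hne : i ≠ j) (hadj : ¬ g.Adj i j) :
    ImprovingAdd D c g i j ↔
      c ≤ D i (addE g i j) - D i g ∧ c ≤ D j (addE g i j) - D j g ∧
        (c < D i (addE g i j) - D i g ∨ c < D j (addE g i j) - D j g) := by
  have hj : util D c j (addE g i j) = util D c j g + (D j (addE g i j) - D j g - c) := by
    rw [addE_comm]
    exact util_addE D hne.symm (hadj ∘ Adj.symm)
  simp only [ImprovingAdd, util_addE D hne hadj, hj, ge_iff_le, gt_iff_lt,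
    le_add_iff_nonneg_right, lt_add_iff_pos_right, sub_nonneg, sub_pos]

lemma improvingDel_iff {c : ℝ} (hadj : g.Adj i j) :
    ImprovingDel D c g i j ↔ D i g < D i (delE g i j) + c ∨ D j g < D j (delE g i j) + c := by
  have hj : util D c j (delE g i j) = util D c j g + (D j (delE g i j) - D j g + c) := by
    rw [delE_comm]
    exact util_delE D hadj.symm
  simp only [ImprovingDel, util_delE D hadj, hj, gt_iff_lt, lt_add_iff_pos_right,
    sub_add_eq_add_sub, sub_pos]

lemma eventually_not_improvingAdd_iff (hne : i ≠ j) (hadj : ¬ g.Adj i j) :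
    (∀ᶠ c in 𝓝[>] (0 : ℝ), ¬ ImprovingAdd D c g i j) ↔
      D i (addE g i j) ≤ D i g ∨ D j (addE g i j) ≤ D j g := by
  simp only [improvingAdd_iff D hne hadj]
  constructor
  · intro h
    by_contra! hgain
    have hsmall : ∀ᶠ c in 𝓝[>] (0 : ℝ),
        c < D i (addE g i j) - D i g ∧ c < D j (addE g i j) - D j g :=
      ((eventually_lt_nhds (sub_pos.mpr hgain.1)).and
        (eventually_lt_nhds (sub_pos.mpr hgain.2))).filter_mono nhdsWithin_le_nhds
    obtain ⟨c, hc, hci, hcj⟩ := (h.and hsmall).exists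
    exact hc ⟨hci.le, hcj.le, Or.inl hci⟩
  · intro hle
    filter_upwards [self_mem_nhdsWithin] with c (hc : 0 < c) ⟨hci, hcj, _⟩
    rcases hle with hle | hle <;> linarith

lemma eventually_not_improvingDel_iff (hadj : g.Adj i j) :
    (∀ᶠ c in 𝓝[>] (0 : ℝ), ¬ ImprovingDel D c g i j) ↔
      D i (delE g i j) < D i g ∧ D j (delE g i j) < D j g := by
  simp only [improvingDel_iff D hadj, not_or, not_lt, eventually_and,
    eventually_nhdsGT_zero_add_le_iff]

theorem apsn_iff :
    APSN D g ↔
      (∀ i j, i ≠ j → ¬ g.Adj i j → D i (addE g i j) ≤ D i g ∨ D j (addE g i j) ≤ D j g) ∧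
        ∀ i j, g.Adj i j → D i (delE g i j) < D i g ∧ D j (delE g i j) < D j g := by
  simp only [apsn_iff_eventually, PairwiseStable, eventually_and, eventually_all]
  exact and_congr (forall₄_congr fun _ _ hne hadj => eventually_not_improvingAdd_iff D hne hadj)
    (forall₃_congr fun _ _ hadj => eventually_not_improvingDel_iff D hadj)

end Game

section Truncation

variable {V : Type*} {C : V → SimpleGraph V → ℝ} {g : SimpleGraph V} {i j : V}

lemma min_addE_le_min_iff (hC : Axiom1 C i) (hne : i ≠ j) (hadj : ¬ g.Adj i j) (t : ℝ) :
    min (C i (addE g i j)) t ≤ min (C i g) t ↔ t ≤ C i g := by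
  rw [← not_lt, ← not_lt, min_lt_min_left_iff, and_iff_right (hC g j hne.symm hadj)]

lemma min_delE_lt_min_iff (hC : Axiom1 C i) (hadj : g.Adj i j) (t : ℝ) :
    min (C i (delE g i j)) t < min (C i g) t ↔ C i (delE g i j) < t := by
  have hlt := hC (delE g i j) j hadj.ne' (not_adj_delE g i j)
  rw [addE_delE hadj] at hlt
  rw [min_lt_min_left_iff, and_iff_right hlt]

end Truncation

theorem statement_14 {V : Type*} [Fintype V] (C : V → SimpleGraph V → ℝ)
    (hC : ∀ i, Axiom1 C i) (θ : V → ℝ) (h : SimpleGraph V) :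
    APSN (fun i g => min (C i g) (θ i)) h ↔
      ((∀ i j : V, i ≠ j → ¬ h.Adj i j → θ i ≤ C i h ∨ θ j ≤ C j h) ∧
       (∀ i j : V, h.Adj i j → C i (delE h i j) < θ i ∧ C j (delE h i j) < θ j)) := by
  rw [apsn_iff]
  refine and_congr (forall₄_congr fun i j hne hadj => ?_) (forall₃_congr fun i j hadj => ?_)
  · rw [min_addE_le_min_iff (hC i) hne hadj, addE_comm,
      min_addE_le_min_iff (hC j) hne.symm (hadj ∘ Adj.symm)]
  · rw [min_delE_lt_min_iff (hC i) hadj, delE_comm, min_delE_lt_min_iff (hC j) hadj.symm]
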